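/- arXiv:1612.04349 — 9 statements merged into one kernel-verified Lean document; each statement's English description precedes it below -/
import Mathlib

section
/- If A, B, C are three n×n cyclic Hankel matrices (i.e., real matrices whose (i,j) entry depends only on i+j mod n), then ABC = CBA. -/
/-!
Over a finite abelian group a Hankel matrix `i, j ↦ v (i + j)` is a circulant `Tᵥ : i, j ↦ v (i - j)`
times the reflection `J = hankel δ₀`, and a product of two Hankel matrices is a product of two
circulants. Hence `A B C = Tₐ T_b' T_c J` and `C B A = T_c T_b' Tₐ J` with `b' = b ∘ neg`, and
circulants commute.
-/

/-- An `n × n` real matrix is cyclic Hankel if its `(i,j)` entry depends only on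
`i + j` modulo `n` (addition in `Fin n`). -/
def IsCyclicHankel {n : ℕ} (M : Matrix (Fin n) (Fin n) ℝ) : Prop :=
  ∀ i j i' j' : Fin n, i + j = i' + j' → M i j = M i' j'

namespace Matrix

variable {G α : Type*} [AddCommGroup G]

def hankel (v : G → α) : Matrix G G α :=
  of fun i j => v (i + j)

@[simp]
theorem hankel_apply (v : G → α) (i j : G) : hankel v i j = v (i + j) :=
  rfl

variable [Fintype G]

theorem hankel_mul_hankel [NonUnitalNonAssocSemiring α] (a b : G → α) :
    hankel a * hankel b = circulant a * circulant (fun i => b (-i)) := by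
  ext i j
  simp only [mul_apply, hankel_apply, circulant_apply]
  exact Fintype.sum_equiv (Equiv.neg G) _ _ fun k => by simp [sub_eq_add_neg, add_comm]

theorem hankel_eq_circulant_mul_hankel_single [NonAssocSemiring α] [DecidableEq G]
    (v : G → α) : hankel v = circulant v * hankel (Pi.single 0 1) := by
  ext i j
  simp [mul_apply, Pi.single_apply, add_eq_zero_iff_eq_neg]

theorem hankel_mul_hankel_mul_hankel_comm [CommSemiring α] (a b c : G → α) :
    hankel a * hankel b * hankel c = hankel c * hankel b * hankel a := by
  classical
  rw [hankel_mul_hankel, hankel_mul_hankel, hankel_eq_circulant_mul_hankel_single a,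
    hankel_eq_circulant_mul_hankel_single c]
  simp only [← Matrix.mul_assoc]
  congr 1
  rw [circulant_mul_comm a, Matrix.mul_assoc, circulant_mul_comm a, ← Matrix.mul_assoc,
    circulant_mul_comm]

end Matrix

theorem IsCyclicHankel.eq_hankel {n : ℕ} [NeZero n] {M : Matrix (Fin n) (Fin n) ℝ}
    (hM : IsCyclicHankel M) : M = Matrix.hankel fun k => M k 0 := by
  ext i j
  exact hM i j (i + j) 0 (add_zero _).symm

/-- If `A`, `B`, `C` are three `n × n` cyclic Hankel matrices, then `A * B * C = C * B * A`. -/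
theorem cyclicHankel_mul_mul_comm {n : ℕ} (A B C : Matrix (Fin n) (Fin n) ℝ)
    (hA : IsCyclicHankel A) (hB : IsCyclicHankel B) (hC : IsCyclicHankel C) :
    A * B * C = C * B * A := by
  rcases n with _ | n
  · exact Subsingleton.elim _ _
  rw [hA.eq_hankel, hB.eq_hankel, hC.eq_hankel]
  exact Matrix.hankel_mul_hankel_mul_hankel_comm _ _ _
end

section
/- The product of an odd number of cyclic Hankel n×n matrices is again a cyclic Hankel matrix; in particular, for cyclic Hankel A, B, C the product ABC is cyclic Hankel and hence symmetric. -/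
/-!
With indices in `ℤ/nℤ`, a matrix is cyclic Hankel when its entries depend only on `i + j`,
and cyclic Toeplitz when they depend only on `i - j`. Reindexing the sum over `k` by a shift
shows that a cyclic Hankel matrix times a cyclic Hankel matrix is cyclic Toeplitz, and times a
cyclic Toeplitz matrix is cyclic Hankel. Hence products of Hankel matrices alternate between the two
classes, landing in the Hankel class for an odd number of factors.
-/

open Matrix

def IsCyclicToeplitz {n : ℕ} (M : Matrix (Fin n) (Fin n) ℝ) : Prop :=
  ∀ i j i' j' : Fin n, i + j' = i' + j → M i j = M i' j'

theorem isCyclicToeplitz_one {n : ℕ} : IsCyclicToeplitz (1 : Matrix (Fin n) (Fin n) ℝ) := by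
  intro i j i' j' h
  have hdiag : i = j ↔ i' = j' := by
    constructor <;> rintro rfl
    · exact (add_left_cancel (h.trans (add_comm i' i))).symm
    · exact add_left_cancel ((add_comm i' i).trans h)
  simp only [one_apply, hdiag]

namespace IsCyclicHankel

variable {n : ℕ} {A B : Matrix (Fin n) (Fin n) ℝ}

theorem transpose_eq (hA : IsCyclicHankel A) : Aᵀ = A :=
  ext fun i j => hA j i i j (add_comm j i)

variable [NeZero n]

theorem mul_apply_eq_of_shift (hA : IsCyclicHankel A) {i j i' j' : Fin n}
    (hB : ∀ k, B k j = B (k - (i' - i)) j') : (A * B) i j = (A * B) i' j' := by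
  simp only [mul_apply]
  refine Fintype.sum_equiv (Equiv.subRight (i' - i)) _ _ fun k => ?_
  rw [Equiv.subRight_apply, ← hB, hA i' (k - (i' - i)) i k (by abel)]

theorem mul_isCyclicHankel (hA : IsCyclicHankel A) (hB : IsCyclicHankel B) :
    IsCyclicToeplitz (A * B) := fun i j i' j' h =>
  hA.mul_apply_eq_of_shift fun k => hB _ _ _ _ (by open Fin.CommRing in linear_combination -h)

theorem mul_isCyclicToeplitz (hA : IsCyclicHankel A) (hB : IsCyclicToeplitz B) :
    IsCyclicHankel (A * B) := fun i j i' j' h =>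
  hA.mul_apply_eq_of_shift fun k => hB _ _ _ _ (by open Fin.CommRing in linear_combination -h)

theorem list_prod (L : List (Matrix (Fin n) (Fin n) ℝ)) (hL : ∀ M ∈ L, IsCyclicHankel M) :
    (Odd L.length → IsCyclicHankel L.prod) ∧ (Even L.length → IsCyclicToeplitz L.prod) := by
  induction L with
  | nil => exact ⟨fun h => absurd h (by simp), fun _ => isCyclicToeplitz_one⟩
  | cons A L ih =>
    have hA : IsCyclicHankel A := hL A List.mem_cons_self
    obtain ⟨ihOdd, ihEven⟩ := ih fun M hM => hL M (List.mem_cons_of_mem A hM)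
    rw [List.prod_cons, List.length_cons, Nat.odd_add_one, Nat.even_add_one,
      Nat.not_odd_iff_even, Nat.not_even_iff_odd]
    exact ⟨fun h => hA.mul_isCyclicToeplitz (ihEven h), fun h => hA.mul_isCyclicHankel (ihOdd h)⟩

end IsCyclicHankel

/-- The product of an odd number of cyclic Hankel matrices is cyclic Hankel;
in particular, for cyclic Hankel `A`, `B`, `C` the product `A * B * C` is cyclic
Hankel and hence symmetric. -/
theorem odd_prod_cyclicHankel {n : ℕ} :
    (∀ L : List (Matrix (Fin n) (Fin n) ℝ), (∀ M ∈ L, IsCyclicHankel M) →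
      Odd L.length → IsCyclicHankel L.prod) ∧
    (∀ A B C : Matrix (Fin n) (Fin n) ℝ,
      IsCyclicHankel A → IsCyclicHankel B → IsCyclicHankel C →
      IsCyclicHankel (A * B * C) ∧ (A * B * C)ᵀ = A * B * C) := by
  rcases n.eq_zero_or_pos with rfl | hn
  · exact ⟨fun _ _ _ i => i.elim0,
      fun _ _ _ _ _ _ => ⟨fun i => i.elim0, ext fun i => i.elim0⟩⟩
  have : NeZero n := ⟨hn.ne'⟩
  refine ⟨fun L hL => (IsCyclicHankel.list_prod L hL).1, fun A B C hA hB hC => ?_⟩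
  have hABC : IsCyclicHankel (A * B * C) :=
    mul_assoc A B C ▸ hA.mul_isCyclicToeplitz (hB.mul_isCyclicHankel hC)
  exact ⟨hABC, hABC.transpose_eq⟩
end

section
/- Let X(u) denote the n×n cyclic Hankel matrix with first column u ∈ ℝ^n, i.e., X(u)_{i,j} = u_{i+j−1 mod n}. Then the 2n×2n matrix J(x) with block form [[0, X(u)], [−X(u), 0]], where x = (u,v), defines a Poisson bracket on ℝ^{2n}: the bracket {x_i, x_j} = J(x)_{ij} satisfies the Jacobi identity. -/
open Matrix

/-- The cyclic Hankel matrix with first column `u`: `X(u) i j = u (i + j)` (indices mod `n`). -/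
def cycHankel {n : ℕ} (u : Fin n → ℝ) : Matrix (Fin n) (Fin n) ℝ :=
  Matrix.of fun i j => u (i + j)

/-- The Lie-Poisson tensor `J(x) = [[0, X(u)], [-X(u), 0]]` on `ℝ^{2n}`, where
`u` is the first half of the coordinates of `x`. -/
def LPtensor {n : ℕ} (x : Fin n ⊕ Fin n → ℝ) :
    Matrix (Fin n ⊕ Fin n) (Fin n ⊕ Fin n) ℝ :=
  Matrix.fromBlocks 0 (cycHankel (x ∘ Sum.inl)) (-(cycHankel (x ∘ Sum.inl))) 0

/-! Since `J(x)` is linear in `x`, the sum `Σ_m J(e_m)_{jk} J(x)_{im}` is the entry `(j, k)` of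
`J` evaluated at the `i`-th row of `J(x)`. As only the off-diagonal blocks of `J` are nonzero and
they depend on `u` alone, a cyclic term survives only when two of `i, j, k` lie in the second
half; the two surviving terms are `± u_{a+b+c}` and cancel because addition mod `n` is associative
and commutative. -/

section LPtensor

variable {n : ℕ} (x : Fin n ⊕ Fin n → ℝ) (p q : Fin n)

@[simp]
lemma LPtensor_apply_inl_inl : LPtensor x (.inl p) (.inl q) = 0 := rfl

@[simp]
lemma LPtensor_apply_inl_inr : LPtensor x (.inl p) (.inr q) = x (.inl (p + q)) := rfl

@[simp]
lemma LPtensor_apply_inr_inl : LPtensor x (.inr p) (.inl q) = -x (.inl (p + q)) := rfl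

@[simp]
lemma LPtensor_apply_inr_inr : LPtensor x (.inr p) (.inr q) = 0 := rfl

variable (n) in
def LPtensorLinearMap : (Fin n ⊕ Fin n → ℝ) →ₗ[ℝ] Matrix (Fin n ⊕ Fin n) (Fin n ⊕ Fin n) ℝ where
  toFun := LPtensor
  map_add' x y := by ext (p | p) (q | q) <;> simp [add_comm]
  map_smul' c x := by ext (p | p) (q | q) <;> simp

lemma sum_LPtensor_single_mul (y : Fin n ⊕ Fin n → ℝ) (j k : Fin n ⊕ Fin n) :
    ∑ m, LPtensor (Pi.single m 1) j k * y m = LPtensor y j k := by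
  have hsum : ∑ m, y m • LPtensor (Pi.single m (1 : ℝ)) = LPtensor y := by
    change ∑ m, y m • LPtensorLinearMap n (Pi.single m 1) = LPtensorLinearMap n y
    simp_rw [← map_smul, ← map_sum, ← Pi.single_smul', smul_eq_mul, mul_one,
      Finset.univ_sum_single]
  simp only [← hsum, Matrix.sum_apply, Matrix.smul_apply, smul_eq_mul, mul_comm]

lemma cyclic_sum_LPtensor_row_eq_zero (i j k : Fin n ⊕ Fin n) :
    LPtensor (LPtensor x i) j k + LPtensor (LPtensor x j) k i + LPtensor (LPtensor x k) i j
      = 0 := by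
  rcases i with a | a <;> rcases j with b | b <;> rcases k with c | c <;>
    simp [add_comm, add_left_comm]

end LPtensor

/-- `J(x)` defines a Poisson bracket on `ℝ^{2n}`: the Jacobi identity holds.
Since the entries of `J` are linear in `x`, the partial derivative
`∂J_{jk}/∂x_m` equals `J(e_m)_{jk}`, and the Jacobi identity reads
`Σ_m J(e_m)_{jk} J(x)_{im} + cyclic = 0`. -/
theorem LPtensor_jacobi {n : ℕ} (x : Fin n ⊕ Fin n → ℝ) (i j k : Fin n ⊕ Fin n) :
    (∑ m : Fin n ⊕ Fin n, LPtensor (Pi.single m 1) j k * LPtensor x i m)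
    + (∑ m : Fin n ⊕ Fin n, LPtensor (Pi.single m 1) k i * LPtensor x j m)
    + (∑ m : Fin n ⊕ Fin n, LPtensor (Pi.single m 1) i j * LPtensor x k m) = 0 := by
  simp only [sum_LPtensor_single_mul]
  exact cyclic_sum_LPtensor_row_eq_zero x i j k
end

section
/- Let J(x) be a Poisson tensor on ℝ^N and A a constant N×N matrix with A^T J(x) = J(x) A for all x. If functions H_0, …, H_{n−1} satisfy ∇H_i = A ∇H_{i−1} for i = 1,…,n−1, then the H_i are pairwise in involution: (∇H_i)^T J(x) ∇H_j = 0 for all i, j. -/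
/-!
Along the recursion every gradient is `∇H_i = Aⁱ ∇H_0`, and `Aᵀ J = J A` lets the powers of `A`
be moved across `J`, so `(∇H_i)ᵀ J ∇H_j = (∇H_0)ᵀ (J A^(i+j)) ∇H_0`. The matrix `J A^(i+j)` is
again skew-symmetric, and a skew-symmetric quadratic form vanishes.
-/

open Matrix

namespace Matrix

variable {n R : Type*} [Fintype n] [CommRing R]

theorem dotProduct_mulVec_self_eq_zero_of_transpose_eq_neg [IsAddTorsionFree R]
    {M : Matrix n n R} (hM : Mᵀ = -M) (v : n → R) : v ⬝ᵥ M *ᵥ v = 0 := by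
  have hneg : v ⬝ᵥ M *ᵥ v = -(v ⬝ᵥ M *ᵥ v) := calc
    v ⬝ᵥ M *ᵥ v = v ⬝ᵥ Mᵀ *ᵥ v := by
      rw [dotProduct_mulVec, ← mulVec_transpose, dotProduct_comm]
    _ = -(v ⬝ᵥ M *ᵥ v) := by rw [hM, neg_mulVec, dotProduct_neg]
  exact self_eq_neg.mp hneg

variable [DecidableEq n] {A J : Matrix n n R}

theorem pow_transpose_mul_eq_mul_pow (hA : Aᵀ * J = J * A) (k : ℕ) :
    (A ^ k)ᵀ * J = J * A ^ k := by
  rw [transpose_pow]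
  exact ((SemiconjBy.pow_right hA.symm k).symm)

theorem transpose_mul_pow_eq_neg (hJ : Jᵀ = -J) (hA : Aᵀ * J = J * A) (k : ℕ) :
    (J * A ^ k)ᵀ = -(J * A ^ k) := by
  rw [transpose_mul, hJ, mul_neg, pow_transpose_mul_eq_mul_pow hA]

theorem pow_mulVec_dotProduct_mul_pow_mulVec (hA : Aᵀ * J = J * A) (i j : ℕ) (v : n → R) :
    (A ^ i) *ᵥ v ⬝ᵥ J *ᵥ (A ^ j) *ᵥ v = v ⬝ᵥ (J * A ^ (i + j)) *ᵥ v := by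
  rw [mulVec_mulVec, ← vecMul_transpose, ← dotProduct_mulVec, mulVec_mulVec, ← mul_assoc,
    pow_transpose_mul_eq_mul_pow hA, mul_assoc, ← pow_add]

end Matrix

theorem Fin.eq_pow_mulVec_of_succ_eq_mulVec {n R : Type*} [Fintype n] [DecidableEq n]
    [CommRing R] {m : ℕ} {A : Matrix n n R} {v : Fin m → n → R}
    (hrec : ∀ i : Fin m, ∀ h : (i : ℕ) + 1 < m, v ⟨(i : ℕ) + 1, h⟩ = A *ᵥ v i) (i : Fin m) :
    v i = (A ^ (i : ℕ)) *ᵥ v ⟨0, i.pos⟩ := by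
  obtain ⟨k, hk⟩ := i
  induction k with
  | zero => simp
  | succ k ih =>
    rw [hrec ⟨k, by omega⟩ hk, ih, mulVec_mulVec, ← pow_succ']

theorem involution_of_grad_recursion_general {N m : ℕ}
    (J : (Fin N → ℝ) → Matrix (Fin N) (Fin N) ℝ)
    (hJskew : ∀ x, (J x)ᵀ = -(J x))
    (A : Matrix (Fin N) (Fin N) ℝ)
    (hA : ∀ x, Aᵀ * J x = J x * A)
    (g : Fin m → (Fin N → ℝ) → (Fin N → ℝ))
    (hrec : ∀ i : Fin m, ∀ h : (i : ℕ) + 1 < m, ∀ x,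
      g ⟨(i : ℕ) + 1, h⟩ x = A.mulVec (g i x)) :
    ∀ i j : Fin m, ∀ x, (g i x) ⬝ᵥ (J x).mulVec (g j x) = 0 := by
  intro i j x
  have hpow := Fin.eq_pow_mulVec_of_succ_eq_mulVec (v := fun k => g k x) (fun k hk => hrec k hk x)
  rw [hpow i, hpow j, pow_mulVec_dotProduct_mul_pow_mulVec (hA x)]
  exact dotProduct_mulVec_self_eq_zero_of_transpose_eq_neg
    (transpose_mul_pow_eq_neg (hJskew x) (hA x) _) _

/-- Let `J(x)` be a Poisson tensor on `ℝ^N` (skew-symmetric matrices) and `A` a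
constant matrix with `Aᵀ J(x) = J(x) A` for all `x`. If the gradients
`g i = ∇H_i` of functions `H_0, …, H_{m-1}` satisfy `∇H_i = A ∇H_{i-1}`, then
the `H_i` are pairwise in involution: `(∇H_i)ᵀ J(x) ∇H_j = 0`. -/
theorem involution_of_grad_recursion {N m : ℕ}
    (J : (Fin N → ℝ) → Matrix (Fin N) (Fin N) ℝ)
    (hJskew : ∀ x, (J x)ᵀ = -(J x))
    (A : Matrix (Fin N) (Fin N) ℝ)
    (hA : ∀ x, Aᵀ * J x = J x * A)
    (H : Fin m → (Fin N → ℝ) → ℝ)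
    (g : Fin m → (Fin N → ℝ) → (Fin N → ℝ))
    (hdiff : ∀ i x, DifferentiableAt ℝ (H i) x)
    (hgrad : ∀ i x j, fderiv ℝ (H i) x (Pi.single j 1) = g i x j)
    (hrec : ∀ i : Fin m, ∀ h : (i : ℕ) + 1 < m, ∀ x,
      g ⟨(i : ℕ) + 1, h⟩ x = A.mulVec (g i x)) :
    ∀ i j : Fin m, ∀ x, (g i x) ⬝ᵥ (J x).mulVec (g j x) = 0 :=
  involution_of_grad_recursion_general J hJskew A hA g hrec
end

section
/- Let J(x) = [[0, X(u)], [−X(u), 0]] be the 2n×2n Lie-Poisson tensor with X(u) the cyclic Hankel matrix of u, x = (u,v). Then a constant 2n×2n matrix A satisfies A^T J(x) = J(x) A for all x ∈ ℝ^{2n} if and only if A is block diagonal A = 𝒜 ⊕ 𝒜 with 𝒜 an n×n circulant matrix. -/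
/-!
Since `X(u)` is linear in `u`, testing `Mᵀ X(u) = X(u) N` on the unit vectors `u = e_m` shows
that it holds for all `u` iff `M (m - j) i = N (m - i) j` for all `m, i, j`. Taking `i = j`
forces `N = M`. Applied to the four blocks of `Aᵀ J(x) = J(x) A`, this makes each off-diagonal
block equal to its own negative, identifies the two diagonal blocks, and what remains of the
relation for the diagonal block is exactly circulance.
-/

open Matrix

/-- An `n × n` matrix is circulant if `M_{i,j}` depends only on `j - i` mod `n`. -/
def IsCirculant {n : ℕ} (M : Matrix (Fin n) (Fin n) ℝ) : Prop :=
  ∀ i j i' j' : Fin n, j - i = j' - i' → M i j = M i' j'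

theorem fromBlocks_transpose_mul_eq_mul_iff {ι R : Type*} [Fintype ι] [CommRing R]
    (P Q S T H : Matrix ι ι R) :
    (fromBlocks P Q S T)ᵀ * fromBlocks 0 H (-H) 0 = fromBlocks 0 H (-H) 0 * fromBlocks P Q S T ↔
      (-S)ᵀ * H = H * S ∧ Pᵀ * H = H * T ∧ Tᵀ * H = H * P ∧ Qᵀ * H = H * -Q := by
  rw [fromBlocks_transpose, fromBlocks_multiply, fromBlocks_multiply, fromBlocks_inj]
  simp only [mul_zero, zero_mul, add_zero, zero_add, mul_neg, neg_mul, transpose_neg,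
    neg_inj]

section CycHankel

variable {n : ℕ} [NeZero n]

theorem transpose_mul_cycHankel_apply (M : Matrix (Fin n) (Fin n) ℝ) (u : Fin n → ℝ)
    (i j : Fin n) : (Mᵀ * cycHankel u) i j = ∑ m, M (m - j) i * u m := by
  simp only [mul_apply, transpose_apply, cycHankel, of_apply]
  exact (Fintype.sum_equiv (Equiv.subRight j) _ _ fun m => by simp).symm

theorem cycHankel_mul_apply (N : Matrix (Fin n) (Fin n) ℝ) (u : Fin n → ℝ) (i j : Fin n) :
    (cycHankel u * N) i j = ∑ m, N (m - i) j * u m := by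
  simp only [mul_apply, cycHankel, of_apply]
  exact (Fintype.sum_equiv (Equiv.subRight i) _ _ fun m => by simp [mul_comm]).symm

theorem forall_transpose_mul_cycHankel_eq_iff (M N : Matrix (Fin n) (Fin n) ℝ) :
    (∀ u, Mᵀ * cycHankel u = cycHankel u * N) ↔ ∀ m i j, M (m - j) i = N (m - i) j := by
  simp only [← Matrix.ext_iff, transpose_mul_cycHankel_apply, cycHankel_mul_apply]
  constructor
  · intro h m i j
    simpa [Pi.single_apply] using h (Pi.single m 1) i j
  · intro h u i j
    simp only [h]

theorem eq_of_forall_sub_apply_eq {M N : Matrix (Fin n) (Fin n) ℝ}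
    (h : ∀ m i j, M (m - j) i = N (m - i) j) : N = M := by
  ext a i
  simpa using (h (a + i) i i).symm

theorem isCirculant_iff (M : Matrix (Fin n) (Fin n) ℝ) :
    IsCirculant M ↔ ∀ m i j, M (m - j) i = M (m - i) j := by
  constructor
  · intro hM m i j
    exact hM _ _ _ _ (by abel)
  · intro hM i j i' j' hij
    have hj' : i' + j - i = j' := by rw [add_sub_assoc, hij]; abel
    have h := hM (i' + j) j (i' + j - i)
    rwa [sub_sub_cancel, add_sub_cancel_right, hj'] at h

theorem forall_fromBlocks_transpose_mul_LPtensor_eq_iff (P Q S T : Matrix (Fin n) (Fin n) ℝ) :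
    (∀ x, (fromBlocks P Q S T)ᵀ * LPtensor x = LPtensor x * fromBlocks P Q S T) ↔
      (∀ m i j, -S (m - j) i = S (m - i) j) ∧ (∀ m i j, P (m - j) i = T (m - i) j) ∧
        (∀ m i j, T (m - j) i = P (m - i) j) ∧ (∀ m i j, Q (m - j) i = -Q (m - i) j) := by
  simp only [LPtensor, fromBlocks_transpose_mul_eq_mul_iff]
  refine Iff.trans ⟨fun h u => h (Sum.elim u 0), fun h x => h _⟩ ?_
  simp only [Sum.elim_comp_inl, forall_and, forall_transpose_mul_cycHankel_eq_iff,
    Matrix.neg_apply]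

end CycHankel

/-- A constant `2n × 2n` matrix `A` satisfies `Aᵀ J(x) = J(x) A` for all `x` iff
`A = 𝒜 ⊕ 𝒜` is block diagonal with `𝒜` circulant. -/
theorem LPtensor_commutant {n : ℕ}
    (A : Matrix (Fin n ⊕ Fin n) (Fin n ⊕ Fin n) ℝ) :
    (∀ x, Aᵀ * LPtensor x = LPtensor x * A) ↔
    (∃ 𝒜 : Matrix (Fin n) (Fin n) ℝ, IsCirculant 𝒜 ∧
      A = Matrix.fromBlocks 𝒜 0 0 𝒜) := by
  rcases eq_or_ne n 0 with rfl | hn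
  · exact iff_of_true (fun _ => Subsingleton.elim _ _)
      ⟨0, fun i => i.elim0, Subsingleton.elim _ _⟩
  have : NeZero n := ⟨hn⟩
  obtain ⟨P, Q, S, T, rfl⟩ : ∃ P Q S T, A = fromBlocks P Q S T :=
    ⟨_, _, _, _, (fromBlocks_toBlocks A).symm⟩
  rw [forall_fromBlocks_transpose_mul_LPtensor_eq_iff]
  constructor
  · rintro ⟨hS, hPT, -, hQ⟩
    have : IsAddTorsionFree (Matrix (Fin n) (Fin n) ℝ) :=
      inferInstanceAs (IsAddTorsionFree (Fin n → Fin n → ℝ))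
    have hS0 : S = 0 := self_eq_neg.mp (eq_of_forall_sub_apply_eq hS)
    have hQ0 : Q = 0 := neg_eq_self.mp (eq_of_forall_sub_apply_eq hQ)
    obtain rfl : P = T := (eq_of_forall_sub_apply_eq hPT).symm
    exact ⟨P, (isCirculant_iff P).mpr hPT, by rw [hS0, hQ0]⟩
  · rintro ⟨𝒜, h𝒜, hA⟩
    obtain ⟨rfl, rfl, rfl, rfl⟩ := fromBlocks_inj.mp hA
    have hcirc := (isCirculant_iff _).mp h𝒜
    exact ⟨by simp, hcirc, hcirc, by simp⟩
end

section
/- Let A = P ⊕ P where P is the n×n cyclic shift matrix. A quadratic form H(x) = (1/2) x^T M x on ℝ^{2n} with symmetric matrix M satisfies A M = M A^T if and only if M has block form [[H1, H2],[H2, H3]] with H1, H2, H3 cyclic Hankel n×n matrices. The space of such M has dimension 3n. -/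
open Matrix

/-- The `n × n` cyclic shift matrix. -/
def cyclicShift (n : ℕ) [NeZero n] : Matrix (Fin n) (Fin n) ℝ :=
  Matrix.of fun i j => if j = i + 1 then (1 : ℝ) else 0

/-- `A = P ⊕ P` with `P` the cyclic shift matrix. -/
def shiftBlock (n : ℕ) [NeZero n] : Matrix (Fin n ⊕ Fin n) (Fin n ⊕ Fin n) ℝ :=
  Matrix.fromBlocks (cyclicShift n) 0 0 (cyclicShift n)

/-- The space of symmetric `2n × 2n` matrices `M` with `A M = M Aᵀ`, `A = P ⊕ P`. -/
def hessSpace (n : ℕ) [NeZero n] : Submodule ℝ (Matrix (Fin n ⊕ Fin n) (Fin n ⊕ Fin n) ℝ) where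
  carrier := {M | Mᵀ = M ∧ shiftBlock n * M = M * (shiftBlock n)ᵀ}
  add_mem' := by
    rintro a b ⟨ha1, ha2⟩ ⟨hb1, hb2⟩
    exact ⟨by rw [transpose_add, ha1, hb1], by rw [mul_add, add_mul, ha2, hb2]⟩
  zero_mem' := by simp
  smul_mem' := by
    rintro c a ⟨ha1, ha2⟩
    exact ⟨by rw [transpose_smul, ha1], by rw [mul_smul_comm, smul_mul_assoc, ha2]⟩

/-!
Left multiplication by `P` shifts rows and right multiplication by `Pᵀ` shifts columns, so
`P N = N Pᵀ` says `N (i + 1) j = N i (j + 1)`, i.e. that `N` is cyclic Hankel. Since `A = P ⊕ P` is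
block diagonal, `A M = M Aᵀ` holds blockwise, and cyclic Hankel blocks are symmetric, so symmetry
of `M` forces its two off-diagonal blocks to coincide. A cyclic Hankel matrix is determined by its
first row, so the space is parametrised linearly and injectively by three vectors of `ℝⁿ`.
-/

open scoped Fin.NatCast

variable {n : ℕ}

def cyclicHankel (a : Fin n → ℝ) : Matrix (Fin n) (Fin n) ℝ :=
  of fun i j => a (i + j)

theorem isCyclicHankel_cyclicHankel (a : Fin n → ℝ) : IsCyclicHankel (cyclicHankel a) :=
  fun i j i' j' h => by simp only [cyclicHankel, of_apply, h]

theorem IsCyclicHankel.transpose_eq_s8 {N : Matrix (Fin n) (Fin n) ℝ} (h : IsCyclicHankel N) :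
    Nᵀ = N := by
  ext i j
  exact h j i i j (add_comm j i)

variable [NeZero n]

theorem IsCyclicHankel.eq_cyclicHankel {N : Matrix (Fin n) (Fin n) ℝ} (h : IsCyclicHankel N) :
    N = cyclicHankel (N 0) := by
  ext i j
  exact h i j 0 (i + j) (zero_add _).symm

theorem isCyclicHankel_iff_exists {N : Matrix (Fin n) (Fin n) ℝ} :
    IsCyclicHankel N ↔ ∃ a, N = cyclicHankel a :=
  ⟨fun h => ⟨N 0, h.eq_cyclicHankel⟩, by rintro ⟨a, rfl⟩; exact isCyclicHankel_cyclicHankel a⟩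

theorem cyclicShift_mul_apply (N : Matrix (Fin n) (Fin n) ℝ) (i j : Fin n) :
    (cyclicShift n * N) i j = N (i + 1) j := by
  simp [cyclicShift, mul_apply]

theorem mul_cyclicShift_transpose_apply (N : Matrix (Fin n) (Fin n) ℝ) (i j : Fin n) :
    (N * (cyclicShift n)ᵀ) i j = N i (j + 1) := by
  simp [cyclicShift, mul_apply]

theorem isCyclicHankel_of_shift {N : Matrix (Fin n) (Fin n) ℝ}
    (h : ∀ i j : Fin n, N (i + 1) j = N i (j + 1)) : IsCyclicHankel N := by
  have shift_nat : ∀ (k : ℕ) (j : Fin n), N k j = N 0 (k + j) := by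
    intro k
    induction k with
    | zero => simp
    | succ k ih =>
      intro j
      rw [Nat.cast_succ, h, ih, add_assoc, add_comm 1 j]
  have first_row : ∀ i j : Fin n, N i j = N 0 (i + j) := fun i j => by
    simpa only [Fin.cast_val_eq_self] using shift_nat i j
  intro i j i' j' hij
  rw [first_row i j, hij, ← first_row]

theorem cyclicShift_mul_eq_mul_transpose_iff (N : Matrix (Fin n) (Fin n) ℝ) :
    cyclicShift n * N = N * (cyclicShift n)ᵀ ↔ IsCyclicHankel N := by
  refine ⟨fun h => isCyclicHankel_of_shift fun i j => ?_, fun h => ?_⟩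
  · simpa only [cyclicShift_mul_apply, mul_cyclicShift_transpose_apply] using
      congrFun (congrFun h i) j
  · ext i j
    rw [cyclicShift_mul_apply, mul_cyclicShift_transpose_apply]
    exact h _ _ _ _ (by rw [add_assoc, add_comm 1 j])

theorem shiftBlock_mul_fromBlocks_eq_iff (A B C D : Matrix (Fin n) (Fin n) ℝ) :
    shiftBlock n * fromBlocks A B C D = fromBlocks A B C D * (shiftBlock n)ᵀ ↔
      IsCyclicHankel A ∧ IsCyclicHankel B ∧ IsCyclicHankel C ∧ IsCyclicHankel D := by
  simp only [shiftBlock, fromBlocks_transpose, transpose_zero, fromBlocks_multiply,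
    Matrix.zero_mul, Matrix.mul_zero, add_zero, zero_add, fromBlocks_inj,
    cyclicShift_mul_eq_mul_transpose_iff]

theorem mem_hessSpace_iff (M : Matrix (Fin n ⊕ Fin n) (Fin n ⊕ Fin n) ℝ) :
    M ∈ hessSpace n ↔ ∃ H1 H2 H3 : Matrix (Fin n) (Fin n) ℝ,
      IsCyclicHankel H1 ∧ IsCyclicHankel H2 ∧ IsCyclicHankel H3 ∧
      M = fromBlocks H1 H2 H2 H3 := by
  constructor
  · rintro ⟨hsym, hrel⟩
    obtain ⟨A, B, C, D, rfl⟩ : ∃ A B C D, M = fromBlocks A B C D :=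
      ⟨_, _, _, _, (fromBlocks_toBlocks M).symm⟩
    rw [shiftBlock_mul_fromBlocks_eq_iff] at hrel
    obtain ⟨hA, hB, -, hD⟩ := hrel
    rw [fromBlocks_transpose, fromBlocks_inj] at hsym
    have hCB : C = B := by rw [← hsym.2.2.1, hB.transpose_eq_s8]
    exact ⟨A, B, D, hA, hB, hD, by rw [hCB]⟩
  · rintro ⟨H1, H2, H3, h1, h2, h3, rfl⟩
    refine ⟨?_, (shiftBlock_mul_fromBlocks_eq_iff _ _ _ _).2 ⟨h1, h2, h2, h3⟩⟩
    rw [fromBlocks_transpose, h1.transpose_eq_s8, h2.transpose_eq_s8, h3.transpose_eq_s8]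

variable (n) in
def hessParam :
    ((Fin n → ℝ) × (Fin n → ℝ) × (Fin n → ℝ)) →ₗ[ℝ]
      Matrix (Fin n ⊕ Fin n) (Fin n ⊕ Fin n) ℝ where
  toFun t := fromBlocks (cyclicHankel t.1) (cyclicHankel t.2.1) (cyclicHankel t.2.1)
    (cyclicHankel t.2.2)
  map_add' _ _ := by ext (i | i) (j | j) <;> rfl
  map_smul' _ _ := by ext (i | i) (j | j) <;> rfl

theorem hessParam_injective : Function.Injective (hessParam n) := by
  rintro ⟨a, b, c⟩ ⟨a', b', c'⟩ h
  have entry := fun x y => congrFun (congrFun h x) y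
  simp only [Prod.mk.injEq]
  refine ⟨funext fun s => ?_, funext fun s => ?_, funext fun s => ?_⟩
  · simpa [hessParam, cyclicHankel] using entry (.inl 0) (.inl s)
  · simpa [hessParam, cyclicHankel] using entry (.inl 0) (.inr s)
  · simpa [hessParam, cyclicHankel] using entry (.inr 0) (.inr s)

theorem range_hessParam : LinearMap.range (hessParam n) = hessSpace n := by
  ext M
  simp only [LinearMap.mem_range, mem_hessSpace_iff, isCyclicHankel_iff_exists]
  constructor
  · rintro ⟨⟨a, b, c⟩, rfl⟩
    exact ⟨_, _, _, ⟨a, rfl⟩, ⟨b, rfl⟩, ⟨c, rfl⟩, rfl⟩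
  · rintro ⟨_, _, _, ⟨a, rfl⟩, ⟨b, rfl⟩, ⟨c, rfl⟩, rfl⟩
    exact ⟨(a, b, c), rfl⟩

/-- A symmetric matrix `M` (the Hessian of a quadratic form) satisfies
`A M = M Aᵀ` with `A = P ⊕ P` iff `M = [[H1, H2],[H2, H3]]` with cyclic Hankel
blocks; the space of such `M` has dimension `3n`. -/
theorem hess_characterization (n : ℕ) [NeZero n] :
    (∀ M : Matrix (Fin n ⊕ Fin n) (Fin n ⊕ Fin n) ℝ, Mᵀ = M →
      (shiftBlock n * M = M * (shiftBlock n)ᵀ ↔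
        ∃ H1 H2 H3 : Matrix (Fin n) (Fin n) ℝ,
          IsCyclicHankel H1 ∧ IsCyclicHankel H2 ∧ IsCyclicHankel H3 ∧
          M = Matrix.fromBlocks H1 H2 H2 H3)) ∧
    Module.finrank ℝ (hessSpace n) = 3 * n := by
  refine ⟨fun M hsym => ?_, ?_⟩
  · rw [← mem_hessSpace_iff]
    exact (and_iff_right hsym).symm
  · rw [← range_hessParam, LinearMap.finrank_range_of_inj hessParam_injective,
      Module.finrank_prod, Module.finrank_prod, Module.finrank_fin_fun]
    ring
end

section
/- Let f(x) be a quadratic homogeneous vector field on ℝ^N with Kahan map x̃ = Φ_f(x,ε) = (I − ε f'(x))^{−1} x (assuming invertibility). Then the Jacobian of the map is dΦ_f(x) = (I − ε f'(x))^{−1} (I + ε f'(x̃)). -/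
/-!
Write `A(y) = 1 - ε f'(y)`, so that `Φ(y) = A(y)⁻¹ y`. Since `f'` is linear, the derivative of
`A(y)⁻¹` in direction `h` is `A⁻¹ (ε f'(h)) A⁻¹`, hence
`dΦ(h) = A⁻¹ h + ε A⁻¹ f'(h) x̃`. Because `f'(h) x̃` is the symmetric bilinear form of the quadratic
field evaluated at `(h, x̃)`, it equals `f'(x̃) h`, which gives `dΦ(h) = A⁻¹ (1 + ε f'(x̃)) h`.
-/

open Matrix

section QuadraticField

variable {R n : Type*} [CommRing R] [Fintype n]

noncomputable def kahanMap [DecidableEq n] (D : (n → R) → Matrix n n R) (ε : R) (y : n → R) :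
    n → R :=
  (1 - ε • D y)⁻¹ *ᵥ y

/-- `2 • ofRowsMulVec M` is the Jacobian of the quadratic field `x ↦ (xᵀ M i x)ᵢ` when every
`M i` is symmetric. -/
def Matrix.ofRowsMulVec (M : n → Matrix n n R) : (n → R) →ₗ[R] Matrix n n R where
  toFun v := of fun i => M i *ᵥ v
  map_add' v w := by ext i j; simp [mulVec_add]
  map_smul' c v := by ext i j; simp [mulVec_smul]

theorem Matrix.ofRowsMulVec_mulVec_comm {M : n → Matrix n n R} (hM : ∀ i, (M i)ᵀ = M i)
    (v w : n → R) : ofRowsMulVec M v *ᵥ w = ofRowsMulVec M w *ᵥ v := by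
  ext i
  calc (M i *ᵥ v) ⬝ᵥ w = (w ᵥ* M i) ⬝ᵥ v := by rw [dotProduct_comm, dotProduct_mulVec]
    _ = (M i *ᵥ w) ⬝ᵥ v := by rw [← mulVec_transpose, hM]

end QuadraticField

section MatrixCalculus

-- Any norm would do: the statements below only see the topology, which all norms share.
attribute [local instance] Matrix.linftyOpNormedAddCommGroup Matrix.linftyOpNormedSpace
  Matrix.linftyOpNormedRing Matrix.linftyOpNormedAlgebra

variable {𝕜 : Type*} [RCLike 𝕜] {m n : Type*} [Fintype m] [Fintype n]
  {E : Type*} [NormedAddCommGroup E] [NormedSpace 𝕜 E]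

variable (𝕜) in
noncomputable def Matrix.mulVecL : Matrix m n 𝕜 →L[𝕜] (n → 𝕜) →L[𝕜] (m → 𝕜) :=
  (mulVecBilin 𝕜 𝕜).mkContinuous₂ 1 fun A v => by
    simpa using linfty_opNorm_mulVec A v

@[simp]
theorem Matrix.mulVecL_apply (A : Matrix m n 𝕜) (v : n → 𝕜) : mulVecL 𝕜 A v = A *ᵥ v := rfl

theorem HasFDerivAt.matrix_mulVec {A : E → Matrix m n 𝕜} {v : E → n → 𝕜}
    {A' : E →L[𝕜] Matrix m n 𝕜} {v' : E →L[𝕜] n → 𝕜} {x : E}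
    (hA : HasFDerivAt A A' x) (hv : HasFDerivAt v v' x) :
    HasFDerivAt (fun y => A y *ᵥ v y)
      ((mulVecL 𝕜 (A x)).comp v' + ((mulVecL 𝕜).flip (v x)).comp A') x :=
  (mulVecL 𝕜).hasFDerivAt_of_bilinear hA hv

theorem HasFDerivAt.matrix_inv [DecidableEq n] {A : E → Matrix n n 𝕜}
    {A' : E →L[𝕜] Matrix n n 𝕜} {x : E} (hA : HasFDerivAt A A' x) (hx : IsUnit (A x)) :
    HasFDerivAt (fun y => (A y)⁻¹)
      (-(ContinuousLinearMap.mulLeftRight 𝕜 _ (A x)⁻¹ (A x)⁻¹).comp A') x := by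
  obtain ⟨u, hu⟩ := hx
  have hinv := hasFDerivAt_ringInverse (𝕜 := 𝕜) u
  rw [coe_units_inv, hu] at hinv
  have hA_inv : (fun y => (A y)⁻¹) = Ring.inverse ∘ A :=
    funext fun y => nonsing_inv_eq_ringInverse _
  exact hA_inv ▸ hinv.comp x hA

theorem hasFDerivAt_kahanMap [DecidableEq n] (D : (n → 𝕜) →ₗ[𝕜] Matrix n n 𝕜)
    (hD : ∀ v w, D v *ᵥ w = D w *ᵥ v) (ε : 𝕜) (x : n → 𝕜) (hx : IsUnit (1 - ε • D x)) :
    HasFDerivAt (kahanMap D ε)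
      (mulVecLin ((1 - ε • D x)⁻¹ * (1 + ε • D (kahanMap D ε x)))).toContinuousLinearMap x := by
  have hA : HasFDerivAt (fun y => 1 - ε • D y) (-(ε • LinearMap.toContinuousLinearMap D)) x :=
    ((ε • LinearMap.toContinuousLinearMap D).hasFDerivAt).const_sub 1
  refine ((hA.matrix_inv hx).matrix_mulVec (hasFDerivAt_id x)).congr_fderiv ?_
  ext1 h
  simp only [kahanMap]
  set P := (1 - ε • D x)⁻¹
  calc P *ᵥ h + (-(P * -(ε • D h) * P)) *ᵥ x
      = P *ᵥ h + ε • P *ᵥ D h *ᵥ P *ᵥ x := by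
        simp only [mul_neg, neg_mul, neg_neg, mul_smul_comm, smul_mul_assoc, smul_mulVec,
          Matrix.mul_assoc, mulVec_mulVec]
    _ = P *ᵥ h + ε • P *ᵥ D (P *ᵥ x) *ᵥ h := by rw [hD]
    _ = (P * (1 + ε • D (P *ᵥ x))) *ᵥ h := by
        rw [mul_add, mul_one, add_mulVec, mul_smul_comm, smul_mulVec, mulVec_mulVec]

end MatrixCalculus

theorem kahan_jacobian_general {N : ℕ}
    (M : Fin N → Matrix (Fin N) (Fin N) ℝ)
    (hMsymm : ∀ i, (M i)ᵀ = M i)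
    (Df : (Fin N → ℝ) → Matrix (Fin N) (Fin N) ℝ)
    (hDf : ∀ x, Df x = Matrix.of (fun i j => 2 * (M i).mulVec x j))
    (ε : ℝ)
    (Φ : (Fin N → ℝ) → (Fin N → ℝ))
    (hΦ : ∀ y, Φ y = (1 - ε • Df y)⁻¹.mulVec y)
    (x : Fin N → ℝ)
    (h1 : IsUnit (1 - ε • Df x)) :
    HasFDerivAt Φ
      ((((1 - ε • Df x)⁻¹ * (1 + ε • Df (Φ x))).mulVecLin).toContinuousLinearMap) x := by
  set D := (2 : ℝ) • ofRowsMulVec M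
  have hDf_eq : Df = D := funext fun y => by ext i j; simp [hDf, D, ofRowsMulVec]
  have hD_symm : ∀ v w, D v *ᵥ w = D w *ᵥ v := fun v w => by
    simp only [D, LinearMap.smul_apply, smul_mulVec, ofRowsMulVec_mulVec_comm hMsymm v w]
  have hΦ_eq : Φ = kahanMap D ε := funext fun y => by rw [hΦ, hDf_eq]; rfl
  subst hDf_eq hΦ_eq
  exact hasFDerivAt_kahanMap D hD_symm ε x h1

/-- The Jacobian of the Kahan map of a homogeneous quadratic vector field:
for `Φ_f(x) = (I - ε f'(x))⁻¹ x` one has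
`dΦ_f(x) = (I - ε f'(x))⁻¹ (I + ε f'(x̃))`, where `x̃ = Φ_f(x)`. -/
theorem kahan_jacobian {N : ℕ}
    (M : Fin N → Matrix (Fin N) (Fin N) ℝ)
    (hMsymm : ∀ i, (M i)ᵀ = M i)
    (f : (Fin N → ℝ) → (Fin N → ℝ))
    (hf : ∀ x i, f x i = x ⬝ᵥ (M i).mulVec x)
    (Df : (Fin N → ℝ) → Matrix (Fin N) (Fin N) ℝ)
    (hDf : ∀ x, Df x = Matrix.of (fun i j => 2 * (M i).mulVec x j))
    (ε : ℝ)
    (Φ : (Fin N → ℝ) → (Fin N → ℝ))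
    (hΦ : ∀ y, Φ y = (1 - ε • Df y)⁻¹.mulVec y)
    (x : Fin N → ℝ)
    (h1 : IsUnit (1 - ε • Df x)) :
    HasFDerivAt Φ
      ((((1 - ε • Df x)⁻¹ * (1 + ε • Df (Φ x))).mulVecLin).toContinuousLinearMap) x :=
  kahan_jacobian_general M hMsymm Df hDf ε Φ hΦ x h1
end

section
/- Let J(x) be the 2n×2n Lie-Poisson tensor and ∇²H a Hessian with cyclic Hankel blocks as above. Then (J(x)∇²H)² is a polynomial in A = P ⊕ P: (J(x)∇²H)² = Σ_{ℓ=0}^{n−1} q_ℓ(x) A^ℓ, where q_ℓ(x) = (1/2n) tr((A^T)^ℓ (J(x)∇²H)²). -/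
open Matrix

/-!
Writing `X = X(u)`, the matrix `J(x)∇²H` has the blocks `[[X H₂, X H₃], [-X H₁, -X H₂]]`. A product
of two cyclic Hankel matrices is circulant, and circulant matrices commute, so the off-diagonal
blocks of the square cancel and both diagonal blocks equal the circulant `C = (X H₂)² - X H₃ X H₁`.
A circulant is `∑_{ℓ<n} c_ℓ P^ℓ`, hence the square is `∑_{ℓ<n} c_ℓ A^ℓ`; the coefficients are read off
with the trace form, for which the `A^ℓ` (`ℓ < n`) are orthogonal with `tr ((Aᵀ)^ℓ A^ℓ) = 2n`.
-/

open Fin.NatCast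

lemma Matrix.trace_fromBlocks {m o R : Type*} [Fintype m] [Fintype o] [AddCommMonoid R]
    (A : Matrix m m R) (B : Matrix m o R) (C : Matrix o m R) (D : Matrix o o R) :
    (fromBlocks A B C D).trace = A.trace + D.trace :=
  Fintype.sum_sum_type _

lemma Matrix.fromBlocks_sq_of_commute {m R : Type*} [Fintype m] [DecidableEq m] [Ring R]
    {C D E : Matrix m m R} (hCD : Commute C D) (hCE : Commute C E) (hDE : Commute D E) :
    fromBlocks C D (-E) (-C) ^ 2 = fromBlocks (C * C - D * E) 0 0 (C * C - D * E) := by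
  rw [sq, fromBlocks_multiply]
  congr 1
  · noncomm_ring
  · rw [mul_neg, hCD.eq, add_neg_cancel]
  · rw [neg_mul_neg, hCE.eq, neg_mul, neg_add_cancel]
  · rw [neg_mul_neg, neg_mul, hDE.eq, neg_add_eq_sub]

lemma Matrix.sum_smul_eq_sum_trace_smul {ι m K : Type*} [DecidableEq ι] [Fintype m] [Field K]
    (s : Finset ι) (B B' : ι → Matrix m m K) {N : K} (hN : N ≠ 0)
    (horth : ∀ i ∈ s, ∀ j ∈ s, (B' i * B j).trace = if i = j then N else 0) (c : ι → K) :
    ∑ j ∈ s, c j • B j = ∑ i ∈ s, (1 / N * (B' i * ∑ j ∈ s, c j • B j).trace) • B i := by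
  refine Finset.sum_congr rfl fun i hi => ?_
  have hcoeff : (B' i * ∑ j ∈ s, c j • B j).trace = c i * N := by
    simp only [Matrix.mul_sum, Matrix.mul_smul, Matrix.trace_sum, Matrix.trace_smul, smul_eq_mul]
    rw [Finset.sum_eq_single_of_mem i hi fun j hj hji => by
      rw [horth i hi j hj, if_neg (Ne.symm hji), mul_zero], horth i hi i hi, if_pos rfl]
  rw [hcoeff, one_div_mul_eq_div, mul_div_cancel_right₀ _ hN]

lemma isCyclicHankel_cycHankel {n : ℕ} (u : Fin n → ℝ) : IsCyclicHankel (cycHankel u) :=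
  fun i j i' j' h => by simp only [cycHankel, Matrix.of_apply, h]

lemma IsCyclicHankel.exists_mul_eq_circulant {n : ℕ} [NeZero n]
    {M N : Matrix (Fin n) (Fin n) ℝ} (hM : IsCyclicHankel M) (hN : IsCyclicHankel N) :
    ∃ c, M * N = circulant c := by
  refine ⟨fun d => ∑ m : Fin n, M 0 (d + m) * N 0 m, ?_⟩
  ext i k
  rw [mul_apply, circulant_apply]
  -- `M i j` depends on `i + j` and `N j k` on `j + k`; after shifting `j` by `k`
  -- the summand depends only on `i - k`
  refine Fintype.sum_equiv (Equiv.addRight k) _ _ fun j => ?_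
  have hMj : M i j = M 0 (i - k + (j + k)) := hM _ _ _ _ (by abel)
  have hNj : N j k = N 0 (j + k) := hN _ _ _ _ (zero_add _).symm
  rw [hMj, hNj, Equiv.coe_addRight]

lemma cyclicShift_pow_apply {n : ℕ} [NeZero n] (ℓ : ℕ) (i j : Fin n) :
    (cyclicShift n ^ ℓ) i j = if j = i + (ℓ : Fin n) then 1 else 0 := by
  induction ℓ generalizing j with
  | zero => simp [one_apply, eq_comm]
  | succ ℓ ih =>
    rw [pow_succ, mul_apply, Finset.sum_eq_single (i + (ℓ : Fin n))]
    · rw [ih, if_pos rfl, one_mul, cyclicShift, of_apply, Nat.cast_succ, add_assoc]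
    · intro k _ hk
      rw [ih, if_neg hk, zero_mul]
    · simp

lemma circulant_eq_sum_cyclicShift_pow {n : ℕ} [NeZero n] (b : Fin n → ℝ) :
    circulant b = ∑ ℓ ∈ Finset.range n, b (-(ℓ : Fin n)) • cyclicShift n ^ ℓ := by
  rw [← Fin.sum_univ_eq_sum_range (fun ℓ => b (-(ℓ : Fin n)) • cyclicShift n ^ ℓ)]
  ext i j
  rw [circulant_apply, Matrix.sum_apply, Finset.sum_eq_single (j - i)]
  · simp [cyclicShift_pow_apply]
  · intro ℓ _ hℓ
    rw [Matrix.smul_apply, cyclicShift_pow_apply, if_neg, smul_zero]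
    rintro rfl
    exact hℓ (by simp)
  · simp

lemma trace_transpose_pow_mul_cyclicShift_pow {n : ℕ} [NeZero n] {ℓ k : ℕ}
    (hℓ : ℓ < n) (hk : k < n) :
    ((cyclicShift n)ᵀ ^ ℓ * cyclicShift n ^ k).trace = if ℓ = k then (n : ℝ) else 0 := by
  have hdiag : ∀ i : Fin n, ((cyclicShift n)ᵀ ^ ℓ * cyclicShift n ^ k) i i
      = if (ℓ : Fin n) = k then 1 else 0 := by
    intro i
    rw [mul_apply, Finset.sum_eq_single (i - (ℓ : Fin n))]
    · simp [← transpose_pow, cyclicShift_pow_apply, sub_add_eq_add_sub, eq_sub_iff_add_eq]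
    · intro j _ hj
      rw [← transpose_pow, transpose_apply, cyclicShift_pow_apply, if_neg, zero_mul]
      rintro rfl
      exact hj (by simp)
    · simp
  have hcast : (ℓ : Fin n) = k ↔ ℓ = k :=
    ⟨fun h => by simpa [Fin.val_cast_of_lt hℓ, Fin.val_cast_of_lt hk] using congrArg Fin.val h,
      congrArg _⟩
  simp only [trace, diag_apply, hdiag, hcast, Finset.sum_const, Finset.card_univ, Fintype.card_fin,
    nsmul_eq_mul]
  split_ifs <;> simp

lemma trace_shiftBlock_transpose_pow_mul_pow {n : ℕ} [NeZero n] {ℓ k : ℕ} (hℓ : ℓ < n) (hk : k < n) :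
    ((shiftBlock n)ᵀ ^ ℓ * shiftBlock n ^ k).trace = if ℓ = k then 2 * (n : ℝ) else 0 := by
  rw [shiftBlock, fromBlocks_transpose, transpose_zero, fromBlocks_diagonal_pow,
    fromBlocks_diagonal_pow, fromBlocks_multiply, trace_fromBlocks]
  simp only [mul_zero, add_zero, zero_add]
  rw [trace_transpose_pow_mul_cyclicShift_pow hℓ hk]
  split_ifs <;> ring

lemma fromBlocks_circulant_eq_sum_shiftBlock_pow {n : ℕ} [NeZero n] (b : Fin n → ℝ) :
    fromBlocks (circulant b) 0 0 (circulant b) =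
      ∑ ℓ ∈ Finset.range n, b (-(ℓ : Fin n)) • shiftBlock n ^ ℓ := by
  simp only [shiftBlock, fromBlocks_diagonal_pow]
  rw [circulant_eq_sum_cyclicShift_pow]
  ext (i | i) (j | j) <;> simp [Matrix.sum_apply]

/-- `(J(x) ∇²H)²` is a polynomial in `A = P ⊕ P`:
`(J(x)∇²H)² = Σ_{ℓ<n} q_ℓ(x) A^ℓ` with
`q_ℓ(x) = (1/2n) tr((Aᵀ)^ℓ (J(x)∇²H)²)`. -/
theorem LP_square_polynomial {n : ℕ} [NeZero n]
    (H1 H2 H3 : Matrix (Fin n) (Fin n) ℝ)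
    (h1 : IsCyclicHankel H1) (h2 : IsCyclicHankel H2) (h3 : IsCyclicHankel H3)
    (x : Fin n ⊕ Fin n → ℝ) :
    (LPtensor x * Matrix.fromBlocks H1 H2 H2 H3) ^ 2 =
      ∑ ℓ ∈ Finset.range n,
        ((1 / (2 * (n : ℝ))) *
          (((shiftBlock n)ᵀ ^ ℓ *
            (LPtensor x * Matrix.fromBlocks H1 H2 H2 H3) ^ 2).trace)) •
          (shiftBlock n) ^ ℓ := by
  have hX := isCyclicHankel_cycHankel (x ∘ Sum.inl)
  obtain ⟨c, hc⟩ := hX.exists_mul_eq_circulant h2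
  obtain ⟨d, hd⟩ := hX.exists_mul_eq_circulant h3
  obtain ⟨e, he⟩ := hX.exists_mul_eq_circulant h1
  have hJH : LPtensor x * fromBlocks H1 H2 H2 H3 =
      fromBlocks (circulant c) (circulant d) (-circulant e) (-circulant c) := by
    simp [LPtensor, fromBlocks_multiply, hc, hd, he]
  have hsq : (LPtensor x * fromBlocks H1 H2 H2 H3) ^ 2 =
      fromBlocks (circulant (circulant c *ᵥ c - circulant d *ᵥ e)) 0 0
        (circulant (circulant c *ᵥ c - circulant d *ᵥ e)) := by
    rw [hJH, fromBlocks_sq_of_commute (circulant_mul_comm c d) (circulant_mul_comm c e)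
      (circulant_mul_comm d e), circulant_mul, circulant_mul, ← circulant_sub]
  have h2n : (2 * (n : ℝ)) ≠ 0 := by simp [NeZero.ne n]
  rw [hsq, fromBlocks_circulant_eq_sum_shiftBlock_pow]
  exact sum_smul_eq_sum_trace_smul _ _ _ h2n (fun ℓ hℓ k hk =>
    trace_shiftBlock_transpose_pow_mul_pow (Finset.mem_range.1 hℓ) (Finset.mem_range.1 hk)) _
end

section
/- In dimension 4 (n = 2), with J(x) the Lie-Poisson tensor built from X(u) = [[x_1, x_2],[x_2, x_1]] and ∇²H = [[h1,h2,h3,h4],[h2,h1,h4,h3],[h3,h4,h5,h6],[h4,h3,h6,h5]], one has (J(x)∇²H)² = q_0(x) I + q_1(x) A where A = [[0,1,0,0],[1,0,0,0],[0,0,0,1],[0,0,1,0]], q_0(x) = α(x_1² + x_2²) + 2β x_1 x_2, q_1(x) = β(x_1² + x_2²) + 2α x_1 x_2, with α = h3² + h4² − h1 h5 − h2 h6 and β = 2 h3 h4 − h1 h6 − h2 h5; moreover ∇q_1 = A ∇q_0. -/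
/-!
In 2 × 2 blocks, `J(x) = [[0, X], [-X, 0]]` and `∇²H = [[P, Q], [Q, T]]` with `X, P, Q, T`
circulant, hence pairwise commuting. So `J ∇²H = [[XQ, XT], [-XP, -XQ]]` squares to the
block-diagonal matrix with both blocks `X²(Q² - PT)`. Multiplying `2 × 2` circulants,
`circ(a, b) circ(c, d) = circ(ac + bd, ad + bc)`, gives `X² = circ(x₁² + x₂², 2x₁x₂)` and
`Q² - PT = circ(α, β)`, hence `X²(Q² - PT) = circ(q₀(x), q₁(x))`, which is `q₀ I + q₁ A`.

The form `q₁` is `q₀` with its two coefficients exchanged; for `c (y₀² + y₁²) + 2 d y₀ y₁` this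
has the same effect on the derivative as exchanging `v₀, v₁` in the direction `v`, which is
what `Aᵀ` does.
-/

open Matrix

theorem sq_fromBlocks_antidiag_mul {R n : Type*} [Ring R] [Fintype n] [DecidableEq n]
    {X P Q T : Matrix n n R} (hXP : Commute X P) (hXQ : Commute X Q) (hXT : Commute X T)
    (hPQ : Commute P Q) (hPT : Commute P T) (hQT : Commute Q T) :
    (fromBlocks 0 X (-X) 0 * fromBlocks P Q Q T) ^ 2 =
      fromBlocks (X ^ 2 * (Q ^ 2 - P * T)) 0 0 (X ^ 2 * (Q ^ 2 - P * T)) := by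
  simp only [sq, fromBlocks_multiply, zero_mul, zero_add, add_zero, neg_mul, mul_neg, neg_neg]
  congr 1
  · rw [hXQ.symm.mul_mul_mul_comm, hXT.symm.mul_mul_mul_comm, hPT.eq, mul_sub, sub_eq_add_neg]
  · rw [hXQ.symm.mul_mul_mul_comm, hXT.symm.mul_mul_mul_comm, hQT.eq, add_neg_cancel]
  · rw [hXP.symm.mul_mul_mul_comm, hXQ.symm.mul_mul_mul_comm, hPQ.eq, neg_add_cancel]
  · rw [hXP.symm.mul_mul_mul_comm, hXQ.symm.mul_mul_mul_comm, mul_sub, neg_add_eq_sub]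

theorem reindex_fromBlocks_fin_two {R : Type*} (A B C D : Matrix (Fin 2) (Fin 2) R) :
    reindex finSumFinEquiv finSumFinEquiv (fromBlocks A B C D) =
      !![A 0 0, A 0 1, B 0 0, B 0 1; A 1 0, A 1 1, B 1 0, B 1 1;
         C 0 0, C 0 1, D 0 0, D 0 1; C 1 0, C 1 1, D 1 0, D 1 1] := by
  ext i j
  fin_cases i <;> fin_cases j <;> rfl

theorem circulant_fin_two_mul {R : Type*} [CommSemiring R] (a b c d : R) :
    circulant ![a, b] * circulant ![c, d] = circulant ![a * c + b * d, a * d + b * c] := by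
  rw [circulant_mul]
  congr 1
  ext i
  fin_cases i <;> simp [mulVec, dotProduct, add_comm]

theorem circulant_fin_two_sq_mul_sub {R : Type*} [CommRing R] (x1 x2 h1 h2 h3 h4 h5 h6 : R) :
    circulant ![x1, x2] ^ 2 *
        (circulant ![h3, h4] ^ 2 - circulant ![h1, h2] * circulant ![h5, h6]) =
      circulant ![x1 ^ 2 + x2 ^ 2, 2 * x1 * x2] *
        circulant ![h3 ^ 2 + h4 ^ 2 - h1 * h5 - h2 * h6, 2 * h3 * h4 - h1 * h6 - h2 * h5] := by
  simp only [sq, circulant_fin_two_mul, ← circulant_sub, cons_sub_cons, empty_sub_empty]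
  congr 3 <;> ring

theorem sq_lieTensor_mul_hessian_fin_four {R : Type*} [CommRing R]
    (x1 x2 h1 h2 h3 h4 h5 h6 α β : R)
    (hα : α = h3 ^ 2 + h4 ^ 2 - h1 * h5 - h2 * h6)
    (hβ : β = 2 * h3 * h4 - h1 * h6 - h2 * h5) :
    (!![0, 0, x1, x2; 0, 0, x2, x1; -x1, -x2, 0, 0; -x2, -x1, 0, 0] *
        !![h1, h2, h3, h4; h2, h1, h4, h3; h3, h4, h5, h6; h4, h3, h6, h5]) ^ 2 =
      (α * (x1 ^ 2 + x2 ^ 2) + 2 * β * x1 * x2) • (1 : Matrix (Fin 4) (Fin 4) R) +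
      (β * (x1 ^ 2 + x2 ^ 2) + 2 * α * x1 * x2) •
        !![0, 1, 0, 0; 1, 0, 0, 0; 0, 0, 0, 1; 0, 0, 1, 0] := by
  set e : Fin 2 ⊕ Fin 2 ≃ Fin 4 := finSumFinEquiv
  set X := circulant ![x1, x2]
  set P := circulant ![h1, h2]
  set Q := circulant ![h3, h4]
  set T := circulant ![h5, h6]
  set C := circulant
    ![α * (x1 ^ 2 + x2 ^ 2) + 2 * β * x1 * x2, β * (x1 ^ 2 + x2 ^ 2) + 2 * α * x1 * x2]
  have hJ : !![0, 0, x1, x2; 0, 0, x2, x1; -x1, -x2, 0, 0; -x2, -x1, 0, 0] =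
      reindexAlgEquiv R R e (fromBlocks 0 X (-X) 0) := by
    rw [coe_reindexAlgEquiv, reindex_fromBlocks_fin_two]
    simp [X]
  have hM : !![h1, h2, h3, h4; h2, h1, h4, h3; h3, h4, h5, h6; h4, h3, h6, h5] =
      reindexAlgEquiv R R e (fromBlocks P Q Q T) := by
    rw [coe_reindexAlgEquiv, reindex_fromBlocks_fin_two]
    simp [P, Q, T]
  have hRHS : (α * (x1 ^ 2 + x2 ^ 2) + 2 * β * x1 * x2) • (1 : Matrix (Fin 4) (Fin 4) R) +
      (β * (x1 ^ 2 + x2 ^ 2) + 2 * α * x1 * x2) •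
        !![0, 1, 0, 0; 1, 0, 0, 0; 0, 0, 0, 1; 0, 0, 1, 0] =
      reindexAlgEquiv R R e (fromBlocks C 0 0 C) := by
    rw [coe_reindexAlgEquiv, reindex_fromBlocks_fin_two]
    ext i j
    fin_cases i <;> fin_cases j <;> simp [C]
  have hC : X ^ 2 * (Q ^ 2 - P * T) = C := by
    rw [circulant_fin_two_sq_mul_sub, circulant_fin_two_mul, ← hα, ← hβ]
    congr 3 <;> ring
  have hc (v w : Fin 2 → R) : Commute (circulant v) (circulant w) := circulant_mul_comm v w
  rw [hJ, hM, hRHS, ← map_mul, ← map_pow,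
    sq_fromBlocks_antidiag_mul (hc _ _) (hc _ _) (hc _ _) (hc _ _) (hc _ _) (hc _ _), hC]

theorem fderiv_pairQuadratic_apply {𝕜 ι : Type*} [NontriviallyNormedField 𝕜] [Fintype ι]
    (c d : 𝕜) (i j : ι) (y v : ι → 𝕜) :
    fderiv 𝕜 (fun y : ι → 𝕜 => c * (y i ^ 2 + y j ^ 2) + 2 * d * y i * y j) y v =
      2 * c * (y i * v i + y j * v j) + 2 * d * (y i * v j + y j * v i) := by
  have hi := hasFDerivAt_apply (𝕜 := 𝕜) (F' := fun _ : ι => 𝕜) i y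
  have hj := hasFDerivAt_apply (𝕜 := 𝕜) (F' := fun _ : ι => 𝕜) j y
  have h : HasFDerivAt (fun y : ι → 𝕜 => c * (y i ^ 2 + y j ^ 2) + 2 * d * y i * y j) _ y :=
    (((hi.pow 2).add (hj.pow 2)).const_mul c).add ((hi.const_mul (2 * d)).mul hj)
  rw [h.fderiv]
  simp only [Nat.add_one_sub_one, pow_one, nsmul_eq_mul, Nat.cast_ofNat, smul_add,
    _root_.add_apply, _root_.smul_apply, ContinuousLinearMap.proj_apply, smul_eq_mul]
  ring

theorem fderiv_pairQuadratic_swap {𝕜 ι : Type*} [NontriviallyNormedField 𝕜] [Fintype ι]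
    (c d : 𝕜) (i j : ι) (y v w : ι → 𝕜) (hwi : w i = v j) (hwj : w j = v i) :
    fderiv 𝕜 (fun y : ι → 𝕜 => d * (y i ^ 2 + y j ^ 2) + 2 * c * y i * y j) y v =
      fderiv 𝕜 (fun y : ι → 𝕜 => c * (y i ^ 2 + y j ^ 2) + 2 * d * y i * y j) y w := by
  rw [fderiv_pairQuadratic_apply, fderiv_pairQuadratic_apply, hwi, hwj]
  ring

/-- The 4-dimensional (n = 2) case: explicit form of `(J(x)∇²H)²` and the
gradient relation `∇q₁ = A ∇q₀`. -/
theorem dim4_example (x1 x2 h1 h2 h3 h4 h5 h6 α β : ℝ)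
    (hα : α = h3 ^ 2 + h4 ^ 2 - h1 * h5 - h2 * h6)
    (hβ : β = 2 * h3 * h4 - h1 * h6 - h2 * h5)
    (J : Matrix (Fin 4) (Fin 4) ℝ)
    (hJ : J = !![0, 0, x1, x2; 0, 0, x2, x1; -x1, -x2, 0, 0; -x2, -x1, 0, 0])
    (M : Matrix (Fin 4) (Fin 4) ℝ)
    (hM : M = !![h1, h2, h3, h4; h2, h1, h4, h3; h3, h4, h5, h6; h4, h3, h6, h5])
    (A : Matrix (Fin 4) (Fin 4) ℝ)
    (hA : A = !![0, 1, 0, 0; 1, 0, 0, 0; 0, 0, 0, 1; 0, 0, 1, 0])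
    (q0 q1 : (Fin 4 → ℝ) → ℝ)
    (hq0 : ∀ y : Fin 4 → ℝ, q0 y = α * (y 0 ^ 2 + y 1 ^ 2) + 2 * β * y 0 * y 1)
    (hq1 : ∀ y : Fin 4 → ℝ, q1 y = β * (y 0 ^ 2 + y 1 ^ 2) + 2 * α * y 0 * y 1) :
    (J * M) ^ 2 =
      (α * (x1 ^ 2 + x2 ^ 2) + 2 * β * x1 * x2) • (1 : Matrix (Fin 4) (Fin 4) ℝ) +
      (β * (x1 ^ 2 + x2 ^ 2) + 2 * α * x1 * x2) • A ∧
    (∀ (y v : Fin 4 → ℝ), fderiv ℝ q1 y v = fderiv ℝ q0 y (Aᵀ.mulVec v)) := by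
  subst hJ hM hA
  refine ⟨sq_lieTensor_mul_hessian_fin_four x1 x2 h1 h2 h3 h4 h5 h6 α β hα hβ, fun y v => ?_⟩
  rw [funext hq0, funext hq1]
  refine fderiv_pairQuadratic_swap α β 0 1 y v _ ?_ ?_ <;>
    simp [mulVec, dotProduct, Fin.sum_univ_four]
end
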